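/- Let G be a finite abelian group and ψ : G → ℂ nonzero with KD_ψ pointwise nonnegative on G × Ĝ, where KD_ψ(g,χ) = conj(χ(g))·ψ(g)·conj(ψ̂(χ)). Then there exist a subgroup H ≤ G, an element g₀ ∈ G, a character χ₀ ∈ Ĝ, and a constant c ∈ ℂ∖{0} such that ψ(g) = c·χ₀(g)·1_H(g−g₀) for all g ∈ G. -/

import Mathlib

/-!
If `KD_ψ ≥ 0`, then wherever `ψ g ≠ 0` and `ψ̂ χ ≠ 0` the value `χ g` is the phase of `ψ g` times
the conjugate phase of `ψ̂ χ`. Hence for `g, g'` in the support of `ψ` the value `χ (g - g')` is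
the same for every `χ` in the support of `ψ̂`: all those characters agree with a fixed `χ₀` on the
subgroup `H` generated by `supp ψ - g₀`. Fourier inversion, in which only characters agreeing with
`χ₀` on `H` contribute, then shows that `ψ g * conj (χ₀ g)` is constant on `g₀ + H`, and `ψ`
vanishes off `g₀ + H` by the choice of `H`.
-/

/-- The Fourier transform of `ψ : G → ℂ` on a finite abelian group. -/
noncomputable def ftFin {G : Type*} [AddCommGroup G] [Fintype G]
    (ψ : G → ℂ) (χ : AddChar G Circle) : ℂ :=
  ∑ g : G, ψ g * (starRingEnd ℂ) (χ g : ℂ)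

/-- The Kirkwood–Dirac distribution of the pure state `ψ`. -/
noncomputable def kdFin {G : Type*} [AddCommGroup G] [Fintype G]
    (ψ : G → ℂ) (g : G) (χ : AddChar G Circle) : ℂ :=
  (starRingEnd ℂ) (χ g : ℂ) * ψ g * (starRingEnd ℂ) (ftFin ψ χ)

open Finset ComplexConjugate ComplexOrder

noncomputable instance AddChar.instFintypeCircle {G : Type*} [AddCommGroup G] [Finite G] :
    Fintype (AddChar G Circle) :=
  Fintype.ofEquiv _ AddChar.circleEquivComplex.toEquiv.symm

namespace AddChar

theorem eqOn_closure {G M : Type*} [AddGroup G] [Monoid M] {χ χ' : AddChar G M} {s : Set G}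
    (h : Set.EqOn χ χ' s) : Set.EqOn χ χ' (AddSubgroup.closure s) :=
  AddMonoidHom.eqOn_closure (f := χ.toAddMonoidHom) (g := χ'.toAddMonoidHom) h

theorem coe_circle_apply_sub {G : Type*} [AddGroup G] (χ : AddChar G Circle) (a b : G) :
    (χ (a - b) : ℂ) = χ a * conj (χ b : ℂ) := by
  rw [sub_eq_add_neg, map_add_eq_mul, map_neg_eq_inv, Circle.coe_mul, Circle.coe_inv_eq_conj]

theorem sum_circle_apply_eq_ite {G : Type*} [AddCommGroup G] [Fintype G] [DecidableEq G] (a : G) :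
    ∑ χ : AddChar G Circle, (χ a : ℂ) = if a = 0 then (Fintype.card G : ℂ) else 0 := by
  rw [← sum_apply_eq_ite a]
  exact Fintype.sum_equiv circleEquivComplex.toEquiv _ _ fun _ => rfl

end AddChar

section Fourier

variable {G : Type*} [AddCommGroup G] [Fintype G]

theorem ftFin_mul_apply (ψ : G → ℂ) (χ : AddChar G Circle) (g : G) :
    ftFin ψ χ * χ g = ∑ h, ψ h * conj (χ (h - g) : ℂ) := by
  simp only [ftFin, sum_mul, AddChar.coe_circle_apply_sub, map_mul, Complex.conj_conj, mul_assoc]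

theorem sum_ftFin_mul_apply (ψ : G → ℂ) (g : G) :
    ∑ χ : AddChar G Circle, ftFin ψ χ * χ g = Fintype.card G * ψ g := by
  classical
  simp_rw [ftFin_mul_apply]
  rw [Finset.sum_comm]
  simp_rw [← mul_sum, ← map_sum, AddChar.sum_circle_apply_eq_ite, sub_eq_zero,
    apply_ite conj, map_natCast, map_zero, mul_ite, mul_zero]
  rw [sum_ite_eq' univ g, if_pos (mem_univ g), mul_comm]

theorem exists_ftFin_ne_zero {ψ : G → ℂ} (hψ : ψ ≠ 0) : ∃ χ, ftFin ψ χ ≠ 0 := by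
  obtain ⟨g, hg⟩ := Function.ne_iff.1 hψ
  by_contra! h
  have := sum_ftFin_mul_apply ψ g
  simp only [h, zero_mul, sum_const_zero, zero_eq_mul, Nat.cast_eq_zero, Fintype.card_ne_zero,
    false_or] at this
  exact hg this

end Fourier

section KirkwoodDirac

variable {G : Type*} [AddCommGroup G] [Fintype G] {ψ : G → ℂ}

theorem apply_mul_norm_mul_norm_eq_of_kdFin_nonneg {g : G} {χ : AddChar G Circle}
    (hkd : 0 ≤ kdFin ψ g χ) : (χ g : ℂ) * (‖ψ g‖ * ‖ftFin ψ χ‖) = ψ g * conj (ftFin ψ χ) := by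
  have hnorm : ‖kdFin ψ g χ‖ = ‖ψ g‖ * ‖ftFin ψ χ‖ := by
    simp [kdFin, Circle.norm_coe]
  have hunit : (χ g : ℂ) * conj (χ g : ℂ) = 1 := by
    rw [← Circle.coe_inv_eq_conj, ← Circle.coe_mul, mul_inv_cancel, Circle.coe_one]
  calc (χ g : ℂ) * (‖ψ g‖ * ‖ftFin ψ χ‖) = χ g * kdFin ψ g χ := by
        rw [← Complex.ofReal_mul, ← hnorm, ← Complex.eq_coe_norm_of_nonneg hkd]
    _ = ψ g * conj (ftFin ψ χ) := by
        rw [kdFin, ← mul_assoc, ← mul_assoc, hunit, one_mul]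

theorem apply_sub_mul_norm_mul_norm_eq_of_kdFin_nonneg {g g' : G} {χ : AddChar G Circle}
    (hkd : 0 ≤ kdFin ψ g χ) (hkd' : 0 ≤ kdFin ψ g' χ) (hχ : ftFin ψ χ ≠ 0) :
    (χ (g - g') : ℂ) * (‖ψ g‖ * ‖ψ g'‖) = ψ g * conj (ψ g') := by
  have hE := apply_mul_norm_mul_norm_eq_of_kdFin_nonneg hkd
  have hE' := congrArg conj (apply_mul_norm_mul_norm_eq_of_kdFin_nonneg hkd')
  simp only [map_mul, Complex.conj_ofReal, Complex.conj_conj] at hE'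
  have hb : (‖ftFin ψ χ‖ : ℂ) ^ 2 = ftFin ψ χ * conj (ftFin ψ χ) := by
    rw [Complex.mul_conj, Complex.normSq_eq_norm_sq, Complex.ofReal_pow]
  apply mul_right_cancel₀ (pow_ne_zero 2 (Complex.ofReal_ne_zero.2 (norm_ne_zero_iff.2 hχ)))
  rw [AddChar.coe_circle_apply_sub]
  linear_combination (conj (χ g' : ℂ) * ‖ψ g'‖ * ‖ftFin ψ χ‖) * hE +
    ψ g * conj (ftFin ψ χ) * hE' - ψ g * conj (ψ g') * hb

theorem apply_sub_eq_of_kdFin_nonneg (hKD : ∀ g χ, 0 ≤ kdFin ψ g χ) {g g' : G}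
    (hg : ψ g ≠ 0) (hg' : ψ g' ≠ 0) {χ χ' : AddChar G Circle} (hχ : ftFin ψ χ ≠ 0)
    (hχ' : ftFin ψ χ' ≠ 0) : χ (g - g') = χ' (g - g') := by
  have hnorm : (‖ψ g‖ * ‖ψ g'‖ : ℂ) ≠ 0 := by simp [hg, hg']
  apply Circle.coe_injective
  apply mul_right_cancel₀ hnorm
  rw [apply_sub_mul_norm_mul_norm_eq_of_kdFin_nonneg (hKD g χ) (hKD g' χ) hχ,
    apply_sub_mul_norm_mul_norm_eq_of_kdFin_nonneg (hKD g χ') (hKD g' χ') hχ']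

end KirkwoodDirac

section CosetInversion

variable {G : Type*} [AddCommGroup G] [Fintype G] {ψ : G → ℂ} {H : AddSubgroup G}

theorem ftFin_mul_apply_eq_of_eqOn {g : G} (hψ : ∀ h, ψ h ≠ 0 → h - g ∈ H)
    {χ χ₀ : AddChar G Circle} (hχ : Set.EqOn χ χ₀ H) :
    ftFin ψ χ * χ g = ftFin ψ χ₀ * χ₀ g := by
  simp only [ftFin_mul_apply]
  refine sum_congr rfl fun h _ => ?_
  by_cases hh : ψ h = 0
  · simp [hh]
  · rw [hχ (hψ h hh)]

open Classical in
theorem card_mul_apply_eq_of_support_subset {g₀ : G} {χ₀ : AddChar G Circle}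
    (hψ : ∀ g, ψ g ≠ 0 → g - g₀ ∈ H) (hft : ∀ χ, ftFin ψ χ ≠ 0 → Set.EqOn χ χ₀ H) (g : G) :
    Fintype.card G * ψ g = #{χ : AddChar G Circle | Set.EqOn χ χ₀ H} * ftFin ψ χ₀ * χ₀ g *
      Set.indicator (H : Set G) (fun _ => (1 : ℂ)) (g - g₀) := by
  by_cases hg : g - g₀ ∈ H
  · have hψg : ∀ h, ψ h ≠ 0 → h - g ∈ H := fun h hh => by
      simpa using H.sub_mem (hψ h hh) hg
    rw [Set.indicator_of_mem hg, mul_one, ← sum_ftFin_mul_apply,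
      ← sum_filter_of_ne fun χ _ hχ => hft χ (left_ne_zero_of_mul hχ),
      sum_congr rfl fun χ hχ => ftFin_mul_apply_eq_of_eqOn hψg (mem_filter.1 hχ).2, sum_const,
      nsmul_eq_mul, mul_assoc]
  · rw [Set.indicator_of_notMem hg, mul_zero, not_ne_iff.1 (mt (hψ g) hg), mul_zero]

end CosetInversion

/-- (Classification of KD-positive pure states on finite abelian groups.)
Let `G` be a finite abelian group and `ψ : G → ℂ` nonzero with `KD_ψ` pointwise nonnegative on
`G × Ĝ`. Then there exist a subgroup `H ≤ G`, an element `g₀ ∈ G`, a character `χ₀ ∈ Ĝ`, and a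
nonzero constant `c ∈ ℂ` such that `ψ g = c · χ₀ g · 1_H (g - g₀)` for all `g ∈ G`. -/
theorem kd_positive_pure_states_classification
    {G : Type*} [AddCommGroup G] [Fintype G]
    (ψ : G → ℂ) (hne : ψ ≠ 0)
    (hKD : ∀ (g : G) (χ : AddChar G Circle), 0 ≤ (kdFin ψ g χ).re ∧ (kdFin ψ g χ).im = 0) :
    ∃ (H : AddSubgroup G) (g₀ : G) (χ₀ : AddChar G Circle) (c : ℂ), c ≠ 0 ∧
      ∀ g : G, ψ g = c * (χ₀ g : ℂ) *
        Set.indicator (H : Set G) (fun _ => (1 : ℂ)) (g - g₀) := by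
  classical
  have hKD_nonneg : ∀ g χ, 0 ≤ kdFin ψ g χ := fun g χ =>
    Complex.nonneg_iff.2 ⟨(hKD g χ).1, (hKD g χ).2.symm⟩
  obtain ⟨g₀, hg₀⟩ := Function.ne_iff.1 hne
  obtain ⟨χ₀, hχ₀⟩ := exists_ftFin_ne_zero hne
  set H := AddSubgroup.closure ((· - g₀) '' Function.support ψ)
  have hψ : ∀ g, ψ g ≠ 0 → g - g₀ ∈ H := fun g hg => AddSubgroup.subset_closure ⟨g, hg, rfl⟩
  have hft : ∀ χ, ftFin ψ χ ≠ 0 → Set.EqOn χ χ₀ H := fun χ hχ =>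
    AddChar.eqOn_closure <| Set.forall_mem_image.2 fun g hg =>
      apply_sub_eq_of_kdFin_nonneg hKD_nonneg hg hg₀ hχ hχ₀
  have hA : #{χ : AddChar G Circle | Set.EqOn χ χ₀ H} ≠ 0 :=
    card_ne_zero.2 ⟨χ₀, mem_filter.2 ⟨mem_univ _, Set.eqOn_refl _ _⟩⟩
  have hG : (Fintype.card G : ℂ) ≠ 0 := Nat.cast_ne_zero.2 Fintype.card_ne_zero
  refine ⟨H, g₀, χ₀, #{χ : AddChar G Circle | Set.EqOn χ χ₀ H} * ftFin ψ χ₀ / Fintype.card G,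
    by simp [hA, hχ₀], fun g => ?_⟩
  rw [div_mul_eq_mul_div, div_mul_eq_mul_div, eq_div_iff hG, mul_comm,
    card_mul_apply_eq_of_support_subset hψ hft]
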